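/- The Maslov index satisfies dihedral symmetry in the Witt group: τ(l_1,l_2,…,l_n) = τ(l_2,l_3,…,l_n,l_1) = −τ(l_n,l_{n−1},…,l_1) in W(F). -/

import Mathlib

open Finset LinearMap Module

section Defs

variable {F V : Type} [Field F] [AddCommGroup V] [Module F V]

/-- `B` is a symplectic (non-degenerate alternating) bilinear form on `V`. -/
def IsSymplectic (B : V →ₗ[F] V →ₗ[F] F) : Prop :=
  (∀ x, B x x = 0) ∧ ∀ x : V, (∀ y, B x y = 0) → x = 0

/-- `l` is a Lagrangian subspace for `B` : it is isotropic and maximal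
(equal to its own `B`-orthogonal). -/
def IsLagrangian (B : V →ₗ[F] V →ₗ[F] F) (l : Submodule F V) : Prop :=
  (∀ x ∈ l, ∀ y ∈ l, B x y = 0) ∧ ∀ x : V, (∀ y ∈ l, B x y = 0) → x ∈ l

/-- The bilinear form `q(v,w) = ∑_{n ≥ i ≥ j ≥ 1} B(v_i, w_j)` on `n`-tuples
(indexed by `1,…,n`, modelled as functions `ℕ → V`). -/
noncomputable def mqL (n : ℕ) (B : V →ₗ[F] V →ₗ[F] F) :
    (ℕ → V) →ₗ[F] (ℕ → V) →ₗ[F] F :=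
  ∑ i ∈ Icc 1 n, ∑ j ∈ Icc 1 i,
    B.compl₁₂ (LinearMap.proj i) (LinearMap.proj j)

/-- Membership in `K(l_1,…,l_n) = ker(Σ : ⊕ l_i → V)`: each component lies in the
corresponding Lagrangian and the components sum to zero. -/
def InK (n : ℕ) (l : ℕ → Submodule F V) (v : ℕ → V) : Prop :=
  (∀ i ∈ Icc 1 n, v i ∈ l i) ∧ ∑ i ∈ Icc 1 n, v i = 0

/-- `K(l_1,…,l_n)` as a submodule of `ℕ → V` (components outside `{1,…,n}` vanish). -/
noncomputable def Ksub (n : ℕ) (l : ℕ → Submodule F V) : Submodule F (ℕ → V) :=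
  (Submodule.pi Set.univ fun i => if i ∈ Icc 1 n then l i else ⊥) ⊓
    LinearMap.ker (∑ i ∈ Icc 1 n, (LinearMap.proj i : (ℕ → V) →ₗ[F] V))

/-- Cyclic successor on `{1,…,n}`. -/
def nxt (n i : ℕ) : ℕ := if i = n then 1 else i + 1

/-- Cyclic predecessor on `{1,…,n}`. -/
def prv (n i : ℕ) : ℕ := if i = 1 then n else i - 1

end Defs

section Witt

variable {F M N : Type} [Field F] [AddCommGroup M] [Module F M]
  [AddCommGroup N] [Module F N]

/-- The orthogonal direct sum of two bilinear forms. -/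
noncomputable def prodBF (B₁ : M →ₗ[F] M →ₗ[F] F) (B₂ : N →ₗ[F] N →ₗ[F] F) :
    (M × N) →ₗ[F] (M × N) →ₗ[F] F :=
  B₁.compl₁₂ (LinearMap.fst F M N) (LinearMap.fst F M N) +
    B₂.compl₁₂ (LinearMap.snd F M N) (LinearMap.snd F M N)

/-- Two bilinear spaces are isometric. -/
def FormIsometric (B₁ : M →ₗ[F] M →ₗ[F] F) (B₂ : N →ₗ[F] N →ₗ[F] F) : Prop :=
  ∃ e : M ≃ₗ[F] N, ∀ x y, B₂ (e x) (e y) = B₁ x y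

/-- A hyperbolic quadratic space: a non-degenerate symmetric form admitting a
totally isotropic subspace of half the dimension. -/
def IsHyperbolicForm (B : M →ₗ[F] M →ₗ[F] F) : Prop :=
  (∀ x y, B x y = B y x) ∧ (∀ x : M, (∀ y, B x y = 0) → x = 0) ∧
    ∃ L : Submodule F M, (∀ x ∈ L, ∀ y ∈ L, B x y = 0) ∧
      Module.finrank F M = 2 * Module.finrank F L

/-- Two (non-degenerate symmetric) bilinear spaces represent the same class in the
Witt group `W(F)`: they become isometric after adding hyperbolic spaces. -/
def WittEquiv (B₁ : M →ₗ[F] M →ₗ[F] F) (B₂ : N →ₗ[F] N →ₗ[F] F) : Prop :=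
  ∃ (m₁ m₂ : ℕ) (h₁ : (Fin m₁ → F) →ₗ[F] (Fin m₁ → F) →ₗ[F] F)
    (h₂ : (Fin m₂ → F) →ₗ[F] (Fin m₂ → F) →ₗ[F] F),
    IsHyperbolicForm h₁ ∧ IsHyperbolicForm h₂ ∧
      FormIsometric (prodBF B₁ h₁) (prodBF B₂ h₂)

end Witt

section MoreDefs

variable {F V : Type} [Field F] [AddCommGroup V] [Module F V]

/-- `A` is an anti-derivative of the tuple `w` (cyclically indexed by `1,…,n`):
`A_{{i,i+1}} - A_{{i-1,i}} = w i`, where the edge `{i,i+1}` is indexed by `i`. -/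
def IsAntiDeriv (n : ℕ) (w A : ℕ → V) : Prop :=
  ∀ i ∈ Icc 1 n, A i - A (prv n i) = w i

/-- The natural map `s : K(l_1,…,l_k) ⊕ K(l_1,l_k,…,l_n) → K(l_1,…,l_n)`,
identity on each Lagrangian summand.  Here `v` is a `k`-tuple and `w` an
`(n-k+2)`-tuple whose slots `1, 2, 3, …` correspond to `l_1, l_k, l_{k+1}, …`. -/
def chainS (k : ℕ) (v w : ℕ → V) : ℕ → V := fun i =>
  (if i ≤ k then v i else 0) +
    (if i = 1 then w 1 else if k ≤ i then w (i - k + 2) else 0)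

/-- The sequence `l_1, l_k, l_{k+1}, …, l_n` (of length `n - k + 2`). -/
def chainL (k : ℕ) (l : ℕ → Submodule F V) : ℕ → Submodule F V := fun j =>
  if j = 1 then l 1 else l (k + j - 2)

end MoreDefs


section Helpers

lemma sum_Icc_shift {M : Type*} [AddCommMonoid M] (a b c : ℕ) (f : ℕ → M) :
    ∑ i ∈ Icc a b, f (i + c) = ∑ i ∈ Icc (a + c) (b + c), f i := by
  rw [← Finset.map_add_right_Icc, Finset.sum_map]
  rfl

lemma sum_Icc_reflect {M : Type*} [AddCommMonoid M] (a b c : ℕ) (ha : a ≤ c) (hb : b ≤ c)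
    (f : ℕ → M) :
    ∑ i ∈ Icc a b, f (c - i) = ∑ i ∈ Icc (c - b) (c - a), f i := by
  refine Finset.sum_nbij' (fun i => c - i) (fun i => c - i) ?_ ?_ ?_ ?_ ?_ <;>
    simp only [Finset.mem_Icc] <;> intro x hx <;> first | trivial | omega

lemma sum_Icc_nxt {M : Type*} [AddCommMonoid M] (n : ℕ) (hn : 1 ≤ n) (f : ℕ → M) :
    ∑ i ∈ Icc 1 n, f (nxt n i) = ∑ i ∈ Icc 1 n, f i := by
  refine Finset.sum_nbij' (fun i => nxt n i) (fun i => prv n i) ?_ ?_ ?_ ?_ ?_ <;>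
    simp only [Finset.mem_Icc, nxt, prv] <;> intro x hx <;>
    first | trivial | (split_ifs <;> omega)

lemma sum_Icc_prv {M : Type*} [AddCommMonoid M] (n : ℕ) (hn : 1 ≤ n) (f : ℕ → M) :
    ∑ i ∈ Icc 1 n, f (prv n i) = ∑ i ∈ Icc 1 n, f i := by
  refine Finset.sum_nbij' (fun i => prv n i) (fun i => nxt n i) ?_ ?_ ?_ ?_ ?_ <;>
    simp only [Finset.mem_Icc, nxt, prv] <;> intro x hx <;>
    first | trivial | (split_ifs <;> omega)

lemma sum_Icc_split {M : Type*} [AddCommGroup M] (a n : ℕ) (ha : 1 ≤ a) (han : a ≤ n)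
    (f : ℕ → M) :
    ∑ j ∈ Icc a n, f j = ∑ j ∈ Icc 1 n, f j - ∑ j ∈ Icc 1 a, f j + f a := by
  have h1 : Icc a n = Icc 1 n \ Icc 1 (a - 1) := by
    ext x; simp only [Finset.mem_Icc, Finset.mem_sdiff, not_and, not_le]; omega
  have h2 : Icc 1 (a - 1) ⊆ Icc 1 n := Finset.Icc_subset_Icc le_rfl (by omega)
  have h3 : ∑ j ∈ Icc 1 a, f j = ∑ j ∈ Icc 1 (a - 1), f j + f a := by
    obtain ⟨b, rfl⟩ : ∃ b, a = b + 1 := ⟨a - 1, by omega⟩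
    rw [Finset.sum_Icc_succ_top (by omega)]
    simp
  rw [h1, Finset.sum_sdiff_eq_sub h2, h3]
  abel

section Calc
variable {F V : Type} [Field F] [AddCommGroup V] [Module F V]

lemma bsum_left (B : V →ₗ[F] V →ₗ[F] F) (s : Finset ℕ) (v : ℕ → V) (y : V) :
    ∑ i ∈ s, B (v i) y = B (∑ i ∈ s, v i) y := by
  rw [← LinearMap.sum_apply, ← map_sum]

lemma cyclic_calc (B : V →ₗ[F] V →ₗ[F] F) (n : ℕ) (hn : 1 ≤ n) (v w : ℕ → V)
    (hv : ∑ i ∈ Icc 1 n, v i = 0) (hw : ∑ i ∈ Icc 1 n, w i = 0) :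
    ∑ i ∈ Icc 1 n, ∑ j ∈ Icc 1 i, B (v (nxt n i)) (w (nxt n j)) =
      ∑ i ∈ Icc 1 n, ∑ j ∈ Icc 1 i, B (v i) (w j) := by
  obtain ⟨m, rfl⟩ : ∃ m, n = m + 1 := ⟨n - 1, by omega⟩
  rw [Finset.sum_Icc_succ_top (by omega)]
  -- top term: i = m+1, nxt (m+1) (m+1) = 1
  have htop : ∑ j ∈ Icc 1 (m + 1), B (v (nxt (m+1) (m+1))) (w (nxt (m+1) j)) = 0 := by
    rw [show nxt (m+1) (m+1) = 1 by simp [nxt]]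
    rw [sum_Icc_nxt (m+1) (by omega) (fun j => B (v 1) (w j))]
    rw [← map_sum, hw, map_zero]
  rw [htop, add_zero]
  -- remaining: i ∈ Icc 1 m
  have hrest : ∀ i ∈ Icc 1 m, ∑ j ∈ Icc 1 i, B (v (nxt (m+1) i)) (w (nxt (m+1) j)) =
      ∑ j ∈ Icc 2 (i + 1), B (v (i + 1)) (w j) := by
    intro i hi
    simp only [Finset.mem_Icc] at hi
    rw [show nxt (m+1) i = i + 1 by simp [nxt]; omega]
    rw [show (2 : ℕ) = 1 + 1 from rfl, ← sum_Icc_shift 1 i 1 (fun j => B (v (i+1)) (w j))]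
    refine Finset.sum_congr rfl fun j hj => ?_
    simp only [Finset.mem_Icc] at hj
    rw [show nxt (m+1) j = j + 1 by simp [nxt]; omega]
  rw [Finset.sum_congr rfl hrest]
  -- LHS now: ∑_{i∈Icc 1 m} ∑_{j∈Icc 2 (i+1)} B (v (i+1)) (w j)
  rw [show (∑ i ∈ Icc 1 m, ∑ j ∈ Icc 2 (i + 1), B (v (i + 1)) (w j)) =
      ∑ i ∈ Icc 2 (m + 1), ∑ j ∈ Icc 2 i, B (v i) (w j) from by
    rw [show (2 : ℕ) = 1 + 1 from rfl, ← sum_Icc_shift 1 m 1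
      (fun i => ∑ j ∈ Icc (1+1) i, B (v i) (w j))]]
  -- RHS: split inner sums at j = 1
  have hr : ∀ i ∈ Icc 1 (m + 1), ∑ j ∈ Icc 1 i, B (v i) (w j) =
      B (v i) (w 1) + ∑ j ∈ Icc 2 i, B (v i) (w j) := by
    intro i hi
    simp only [Finset.mem_Icc] at hi
    rw [Finset.Icc_eq_cons_Ioc (by omega : 1 ≤ i), Finset.sum_cons, ← Finset.Icc_add_one_left_eq_Ioc]
    rfl
  rw [Finset.sum_congr rfl hr, Finset.sum_add_distrib]
  rw [bsum_left B _ v (w 1), hv, map_zero, LinearMap.zero_apply, zero_add]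
  -- drop i = 1 term on RHS (inner sum empty)
  rw [Finset.Icc_eq_cons_Ioc (by omega : 1 ≤ m + 1), Finset.sum_cons, ← Finset.Icc_add_one_left_eq_Ioc]
  simp

end Calc

section Calc2
variable {F V : Type} [Field F] [AddCommGroup V] [Module F V]

lemma reversal_calc (B : V →ₗ[F] V →ₗ[F] F) (n : ℕ) (hn : 1 ≤ n) (v w : ℕ → V)
    (hw : ∑ i ∈ Icc 1 n, w i = 0) (hdiag : ∀ i ∈ Icc 1 n, B (v i) (w i) = 0) :
    ∑ i ∈ Icc 1 n, ∑ j ∈ Icc 1 i, B (v (n + 1 - i)) (w (n + 1 - j)) =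
      - ∑ i ∈ Icc 1 n, ∑ j ∈ Icc 1 i, B (v i) (w j) := by
  have step1 : ∀ i ∈ Icc 1 n, ∑ j ∈ Icc 1 i, B (v (n + 1 - i)) (w (n + 1 - j)) =
      ∑ j ∈ Icc (n + 1 - i) n, B (v (n + 1 - i)) (w j) := by
    intro i hi
    simp only [Finset.mem_Icc] at hi
    have := sum_Icc_reflect 1 i (n + 1) (by omega) (by omega)
      (fun j => B (v (n + 1 - i)) (w j))
    simpa using this
  rw [Finset.sum_congr rfl step1]
  rw [show (∑ i ∈ Icc 1 n, ∑ j ∈ Icc (n + 1 - i) n, B (v (n + 1 - i)) (w j)) =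
      ∑ a ∈ Icc 1 n, ∑ j ∈ Icc a n, B (v a) (w j) from by
    have := sum_Icc_reflect 1 n (n + 1) (by omega) (by omega)
      (fun a => ∑ j ∈ Icc a n, B (v a) (w j))
    simpa using this]
  have step2 : ∀ a ∈ Icc 1 n, ∑ j ∈ Icc a n, B (v a) (w j) =
      - ∑ j ∈ Icc 1 a, B (v a) (w j) := by
    intro a ha
    simp only [Finset.mem_Icc] at ha
    rw [sum_Icc_split a n ha.1 ha.2, ← map_sum, hw, map_zero,
      hdiag a (by simp [Finset.mem_Icc]; omega)]
    abel
  rw [Finset.sum_congr rfl step2, ← Finset.sum_neg_distrib]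

end Calc2

section Maps
variable {F V : Type} [Field F] [AddCommGroup V] [Module F V]

/-- Reindexing linear map on tuples, gated to `{1,…,n}`. -/
noncomputable def reIdx (σ : ℕ → ℕ) (n : ℕ) : (ℕ → V) →ₗ[F] (ℕ → V) :=
  LinearMap.pi fun i => if i ∈ Icc 1 n then LinearMap.proj (σ i) else 0

lemma reIdx_apply (σ : ℕ → ℕ) (n : ℕ) (v : ℕ → V) (i : ℕ) :
    (reIdx (F := F) σ n v) i = if i ∈ Icc 1 n then v (σ i) else 0 := by
  simp only [reIdx, LinearMap.pi_apply]
  by_cases h : i ∈ Icc 1 n <;> simp [h]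

lemma mem_Ksub_iff (n : ℕ) (l : ℕ → Submodule F V) (v : ℕ → V) :
    v ∈ Ksub n l ↔ (∀ i, v i ∈ (if i ∈ Icc 1 n then l i else (⊥ : Submodule F V))) ∧
      ∑ i ∈ Icc 1 n, v i = 0 := by
  simp [Ksub, Submodule.mem_inf, Submodule.mem_pi, LinearMap.mem_ker, LinearMap.sum_apply]

lemma Ksub_zero_outside {n : ℕ} {l : ℕ → Submodule F V} {v : ℕ → V} (hv : v ∈ Ksub n l)
    {i : ℕ} (hi : i ∉ Icc 1 n) : v i = 0 := by
  have := ((mem_Ksub_iff n l v).mp hv).1 i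
  rwa [if_neg hi, Submodule.mem_bot] at this

lemma Ksub_mem_l {n : ℕ} {l : ℕ → Submodule F V} {v : ℕ → V} (hv : v ∈ Ksub n l)
    {i : ℕ} (hi : i ∈ Icc 1 n) : v i ∈ l i := by
  have := ((mem_Ksub_iff n l v).mp hv).1 i
  rwa [if_pos hi] at this

lemma Ksub_sum {n : ℕ} {l : ℕ → Submodule F V} {v : ℕ → V} (hv : v ∈ Ksub n l) :
    ∑ i ∈ Icc 1 n, v i = 0 := ((mem_Ksub_iff n l v).mp hv).2

lemma reIdx_reIdx (σ τ : ℕ → ℕ) (n : ℕ)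
    (h : ∀ i ∈ Icc 1 n, σ i ∈ Icc 1 n ∧ τ (σ i) = i) (x : ℕ → V)
    (hx : ∀ i, i ∉ Icc 1 n → x i = 0) :
    reIdx (F := F) σ n (reIdx (F := F) τ n x) = x := by
  funext i
  rw [reIdx_apply]
  by_cases hi : i ∈ Icc 1 n
  · rw [if_pos hi, reIdx_apply, if_pos (h i hi).1, (h i hi).2]
  · rw [if_neg hi, (hx i hi).symm, hx i hi]

/-- Linear equivalence between `Ksub`s induced by compatible reindexings. -/
noncomputable def ksubEquiv (σ τ : ℕ → ℕ) (n : ℕ) (l l' : ℕ → Submodule F V)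
    (hf : ∀ v ∈ Ksub n l, reIdx (F := F) σ n v ∈ Ksub n l')
    (hg : ∀ v ∈ Ksub n l', reIdx (F := F) τ n v ∈ Ksub n l)
    (hσ : ∀ i ∈ Icc 1 n, σ i ∈ Icc 1 n ∧ τ (σ i) = i)
    (hτ : ∀ i ∈ Icc 1 n, τ i ∈ Icc 1 n ∧ σ (τ i) = i) :
    ↥(Ksub n l) ≃ₗ[F] ↥(Ksub n l') :=
  LinearEquiv.ofLinear ((reIdx (F := F) σ n).restrict hf) ((reIdx (F := F) τ n).restrict hg)
    (by
      ext x
      exact congrFun (reIdx_reIdx σ τ n hσ x.1 (fun i hi => Ksub_zero_outside x.2 hi)) _)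
    (by
      ext x
      exact congrFun (reIdx_reIdx τ σ n hτ x.1 (fun i hi => Ksub_zero_outside x.2 hi)) _)

lemma ksubEquiv_apply (σ τ : ℕ → ℕ) (n : ℕ) (l l' : ℕ → Submodule F V) (hf hg hσ hτ)
    (x : ↥(Ksub n l)) :
    ((ksubEquiv σ τ n l l' hf hg hσ hτ x : ↥(Ksub n l')) : ℕ → V) =
      reIdx (F := F) σ n (x : ℕ → V) := rfl

end Maps

end Helpers


section WittHelp
variable {F M N : Type} [Field F] [AddCommGroup M] [Module F M]
  [AddCommGroup N] [Module F N]

lemma isHyperbolic_zero : IsHyperbolicForm (0 : (Fin 0 → F) →ₗ[F] (Fin 0 → F) →ₗ[F] F) := by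
  refine ⟨fun x y => rfl, fun x _ => Subsingleton.elim x 0, ⊥, fun x _ y _ => rfl, ?_⟩
  have h1 : Module.finrank F (Fin 0 → F) = 0 := by simp
  have h2 : Module.finrank F (⊥ : Submodule F (Fin 0 → F)) = 0 := finrank_bot F _
  rw [h1, h2]

lemma witt_of_isometric (t1 : M →ₗ[F] M →ₗ[F] F) (t2 : N →ₗ[F] N →ₗ[F] F)
    (h : FormIsometric t1 t2) : WittEquiv t1 t2 := by
  obtain ⟨e, he⟩ := h
  refine ⟨0, 0, 0, 0, isHyperbolic_zero, isHyperbolic_zero,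
    ⟨e.prodCongr (LinearEquiv.refl F (Fin 0 → F)), fun x y => ?_⟩⟩
  simp [prodBF, he]

lemma formIsometric_quot (Q₁ : M →ₗ[F] M →ₗ[F] F) (Q₂ : N →ₗ[F] N →ₗ[F] F)
    (t1 : (M ⧸ LinearMap.ker Q₁) →ₗ[F] (M ⧸ LinearMap.ker Q₁) →ₗ[F] F)
    (t2 : (N ⧸ LinearMap.ker Q₂) →ₗ[F] (N ⧸ LinearMap.ker Q₂) →ₗ[F] F)
    (e : M ≃ₗ[F] N)
    (hQ0 : ∀ x y : M, Q₂ (e x) (e y) = 0 ↔ Q₁ x y = 0)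
    (htt : ∀ x y : M, t2 (Submodule.Quotient.mk (e x)) (Submodule.Quotient.mk (e y)) =
      t1 (Submodule.Quotient.mk x) (Submodule.Quotient.mk y)) :
    FormIsometric t1 t2 := by
  have hk : LinearMap.ker Q₁ ≤ (LinearMap.ker Q₂).comap (e : M →ₗ[F] N) := by
    intro x hx
    simp only [LinearMap.mem_ker] at hx ⊢
    ext y
    obtain ⟨y', rfl⟩ := e.surjective y
    simp only [LinearMap.coe_coe, LinearMap.zero_apply]
    exact (hQ0 x y').mpr (by rw [hx]; rfl)
  have hk' : LinearMap.ker Q₂ ≤ (LinearMap.ker Q₁).comap (e.symm : N →ₗ[F] M) := by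
    intro y hy
    simp only [LinearMap.mem_ker] at hy ⊢
    ext x
    have := hQ0 (e.symm y) x
    rw [e.apply_symm_apply, hy] at this
    simpa using this.mp rfl
  let f := (LinearMap.ker Q₁).mapQ (LinearMap.ker Q₂) (e : M →ₗ[F] N) hk
  let g := (LinearMap.ker Q₂).mapQ (LinearMap.ker Q₁) (e.symm : N →ₗ[F] M) hk'
  have hfg : f.comp g = LinearMap.id := by
    apply Submodule.linearMap_qext
    ext y
    simp [f, g, Submodule.mapQ_apply]
  have hgf : g.comp f = LinearMap.id := by
    apply Submodule.linearMap_qext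
    ext x
    simp [f, g, Submodule.mapQ_apply]
  refine ⟨LinearEquiv.ofLinear f g hfg hgf, fun X Y => ?_⟩
  obtain ⟨x, rfl⟩ := Submodule.Quotient.mk_surjective _ X
  obtain ⟨y, rfl⟩ := Submodule.Quotient.mk_surjective _ Y
  simp only [LinearEquiv.ofLinear_apply, f, Submodule.mapQ_apply, LinearMap.coe_coe]
  exact htt x y

end WittHelp


section MainHelp
variable {F V : Type} [Field F] [AddCommGroup V] [Module F V]

lemma mqL_apply (n : ℕ) (B : V →ₗ[F] V →ₗ[F] F) (v w : ℕ → V) :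
    mqL n B v w = ∑ i ∈ Icc 1 n, ∑ j ∈ Icc 1 i, B (v i) (w j) := by
  simp [mqL, LinearMap.sum_apply, LinearMap.compl₁₂_apply]

end MainHelp

/-- Dihedral symmetry of the Maslov index in the Witt group:
`τ(l_1,…,l_n) = τ(l_2,…,l_n,l_1) = −τ(l_n,…,l_1)` in `W(F)`. -/
theorem maslov_dihedral_witt
    {F V : Type} [Field F] [AddCommGroup V] [Module F V] [FiniteDimensional F V]
    (hchar : (2 : F) ≠ 0) (n : ℕ) (hn : 1 ≤ n)
    (B : V →ₗ[F] V →ₗ[F] F) (hB : IsSymplectic B)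
    (l : ℕ → Submodule F V) (hl : ∀ i ∈ Icc 1 n, IsLagrangian B (l i))
    -- the cyclically shifted sequence `l_2,…,l_n,l_1`
    (lc : ℕ → Submodule F V) (hlc : ∀ i ∈ Icc 1 n, lc i = if i = n then l 1 else l (i + 1))
    -- the reversed sequence `l_n,…,l_1`
    (lr : ℕ → Submodule F V) (hlr : ∀ i ∈ Icc 1 n, lr i = l (n + 1 - i))
    (t1 : (↥(Ksub n l) ⧸ LinearMap.ker ((mqL n B).domRestrict₁₂ (Ksub n l) (Ksub n l))) →ₗ[F]
          (↥(Ksub n l) ⧸ LinearMap.ker ((mqL n B).domRestrict₁₂ (Ksub n l) (Ksub n l))) →ₗ[F] F)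
    (ht1 : ∀ x y : ↥(Ksub n l),
      t1 (Submodule.Quotient.mk x) (Submodule.Quotient.mk y) = mqL n B x y)
    (t2 : (↥(Ksub n lc) ⧸ LinearMap.ker ((mqL n B).domRestrict₁₂ (Ksub n lc) (Ksub n lc))) →ₗ[F]
          (↥(Ksub n lc) ⧸ LinearMap.ker ((mqL n B).domRestrict₁₂ (Ksub n lc) (Ksub n lc))) →ₗ[F] F)
    (ht2 : ∀ x y : ↥(Ksub n lc),
      t2 (Submodule.Quotient.mk x) (Submodule.Quotient.mk y) = mqL n B x y)
    (t3 : (↥(Ksub n lr) ⧸ LinearMap.ker ((mqL n B).domRestrict₁₂ (Ksub n lr) (Ksub n lr))) →ₗ[F]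
          (↥(Ksub n lr) ⧸ LinearMap.ker ((mqL n B).domRestrict₁₂ (Ksub n lr) (Ksub n lr))) →ₗ[F] F)
    (ht3 : ∀ x y : ↥(Ksub n lr),
      t3 (Submodule.Quotient.mk x) (Submodule.Quotient.mk y) = mqL n B x y) :
    WittEquiv t1 t2 ∧ WittEquiv t1 (-t3) := by
  classical
  -- cyclic shift equivalence
  have hσc : ∀ i ∈ Icc 1 n, nxt n i ∈ Icc 1 n ∧ prv n (nxt n i) = i := by
    intro i hi
    simp only [Finset.mem_Icc] at hi ⊢
    unfold nxt prv
    split_ifs <;> omega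
  have hτc : ∀ i ∈ Icc 1 n, prv n i ∈ Icc 1 n ∧ nxt n (prv n i) = i := by
    intro i hi
    simp only [Finset.mem_Icc] at hi ⊢
    unfold nxt prv
    split_ifs <;> omega
  have hfc : ∀ v ∈ Ksub n l, reIdx (F := F) (nxt n) n v ∈ Ksub n lc := by
    intro v hv
    rw [mem_Ksub_iff]
    constructor
    · intro i
      by_cases hi : i ∈ Icc 1 n
      · rw [if_pos hi, reIdx_apply, if_pos hi]
        have hlci : lc i = l (nxt n i) := by
          rw [hlc i hi]
          unfold nxt
          split_ifs <;> rfl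
        rw [hlci]
        exact Ksub_mem_l hv (hσc i hi).1
      · rw [if_neg hi, reIdx_apply, if_neg hi]
        exact Submodule.zero_mem _
    · rw [Finset.sum_congr rfl (fun i hi => by rw [reIdx_apply, if_pos hi]),
        sum_Icc_nxt n hn]
      exact Ksub_sum hv
  have hgc : ∀ w ∈ Ksub n lc, reIdx (F := F) (prv n) n w ∈ Ksub n l := by
    intro w hw
    rw [mem_Ksub_iff]
    constructor
    · intro i
      by_cases hi : i ∈ Icc 1 n
      · rw [if_pos hi, reIdx_apply, if_pos hi]
        have hi' := hi
        simp only [Finset.mem_Icc] at hi'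
        have hpm : prv n i ∈ Icc 1 n := (hτc i hi).1
        have hlci : lc (prv n i) = l i := by
          rw [hlc _ hpm]
          by_cases h1 : i = 1
          · subst h1
            simp [prv]
          · have h2 : prv n i = i - 1 := by simp [prv, h1]
            rw [h2, if_neg (by omega)]
            congr 1
            omega
        rw [← hlci]
        exact Ksub_mem_l hw hpm
      · rw [if_neg hi, reIdx_apply, if_neg hi]
        exact Submodule.zero_mem _
    · rw [Finset.sum_congr rfl (fun i hi => by rw [reIdx_apply, if_pos hi]),
        sum_Icc_prv n hn]
      exact Ksub_sum hw
  -- reversal equivalence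
  have hσr : ∀ i ∈ Icc 1 n, n + 1 - i ∈ Icc 1 n ∧ n + 1 - (n + 1 - i) = i := by
    intro i hi
    simp only [Finset.mem_Icc] at hi ⊢
    omega
  have hfr : ∀ (l' l'' : ℕ → Submodule F V),
      (∀ i ∈ Icc 1 n, l'' i = l' (n + 1 - i)) →
      ∀ v ∈ Ksub n l', reIdx (F := F) (fun i => n + 1 - i) n v ∈ Ksub n l'' := by
    intro l' l'' hl'' v hv
    rw [mem_Ksub_iff]
    constructor
    · intro i
      by_cases hi : i ∈ Icc 1 n
      · rw [if_pos hi, reIdx_apply, if_pos hi, hl'' i hi]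
        exact Ksub_mem_l hv (hσr i hi).1
      · rw [if_neg hi, reIdx_apply, if_neg hi]
        exact Submodule.zero_mem _
    · rw [Finset.sum_congr rfl (fun i hi => by rw [reIdx_apply, if_pos hi])]
      have := sum_Icc_reflect 1 n (n + 1) (by omega) (by omega) v
      simp only [show n + 1 - n = 1 by omega, Nat.add_sub_cancel] at this
      rw [this]
      exact Ksub_sum hv
  have hlr' : ∀ i ∈ Icc 1 n, l i = lr (n + 1 - i) := by
    intro i hi
    simp only [Finset.mem_Icc] at hi
    rw [hlr (n + 1 - i) (by simp only [Finset.mem_Icc]; omega)]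
    congr 1
    omega
  -- the equivalences
  let eC := ksubEquiv (nxt n) (prv n) n l lc hfc hgc hσc hτc
  let eR := ksubEquiv (fun i => n + 1 - i) (fun i => n + 1 - i) n l lr
    (hfr l lr hlr) (hfr lr l hlr') hσr hσr
  -- form relations
  have hQc : ∀ x y : ↥(Ksub n l),
      mqL n B (reIdx (F := F) (nxt n) n (x : ℕ → V)) (reIdx (F := F) (nxt n) n (y : ℕ → V)) =
        mqL n B (x : ℕ → V) (y : ℕ → V) := by
    intro x y
    rw [mqL_apply, mqL_apply]
    rw [Finset.sum_congr rfl (fun i hi => Finset.sum_congr rfl (fun j hj => by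
      have hj' : j ∈ Icc 1 n := by
        simp only [Finset.mem_Icc] at *
        omega
      rw [reIdx_apply, if_pos hi, reIdx_apply, if_pos hj']))]
    exact cyclic_calc B n hn _ _ (Ksub_sum x.2) (Ksub_sum y.2)
  have hQr : ∀ x y : ↥(Ksub n l),
      mqL n B (reIdx (F := F) (fun i => n + 1 - i) n (x : ℕ → V))
          (reIdx (F := F) (fun i => n + 1 - i) n (y : ℕ → V)) =
        - mqL n B (x : ℕ → V) (y : ℕ → V) := by
    intro x y
    rw [mqL_apply, mqL_apply]
    rw [Finset.sum_congr rfl (fun i hi => Finset.sum_congr rfl (fun j hj => by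
      have hj' : j ∈ Icc 1 n := by
        simp only [Finset.mem_Icc] at *
        omega
      rw [reIdx_apply, if_pos hi, reIdx_apply, if_pos hj']))]
    exact reversal_calc B n hn _ _ (Ksub_sum y.2)
      (fun i hi => (hl i hi).1 _ (Ksub_mem_l x.2 hi) _ (Ksub_mem_l y.2 hi))
  constructor
  · refine witt_of_isometric t1 t2 (formIsometric_quot _ _ t1 t2 eC ?_ ?_)
    · intro x y
      rw [LinearMap.domRestrict₁₂_apply, LinearMap.domRestrict₁₂_apply]
      rw [show ((eC x : ↥(Ksub n lc)) : ℕ → V) = reIdx (F := F) (nxt n) n (x : ℕ → V) from rfl,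
        show ((eC y : ↥(Ksub n lc)) : ℕ → V) = reIdx (F := F) (nxt n) n (y : ℕ → V) from rfl,
        hQc x y]
    · intro x y
      rw [ht2, ht1]
      rw [show ((eC x : ↥(Ksub n lc)) : ℕ → V) = reIdx (F := F) (nxt n) n (x : ℕ → V) from rfl,
        show ((eC y : ↥(Ksub n lc)) : ℕ → V) = reIdx (F := F) (nxt n) n (y : ℕ → V) from rfl,
        hQc x y]
  · refine witt_of_isometric t1 (-t3) (formIsometric_quot _ _ t1 (-t3) eR ?_ ?_)
    · intro x y
      rw [LinearMap.domRestrict₁₂_apply, LinearMap.domRestrict₁₂_apply]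
      rw [show ((eR x : ↥(Ksub n lr)) : ℕ → V) = 
          reIdx (F := F) (fun i => n + 1 - i) n (x : ℕ → V) from rfl,
        show ((eR y : ↥(Ksub n lr)) : ℕ → V) = 
          reIdx (F := F) (fun i => n + 1 - i) n (y : ℕ → V) from rfl,
        hQr x y, neg_eq_zero]
    · intro x y
      simp only [LinearMap.neg_apply]
      rw [ht3, ht1]
      rw [show ((eR x : ↥(Ksub n lr)) : ℕ → V) = 
          reIdx (F := F) (fun i => n + 1 - i) n (x : ℕ → V) from rfl,
        show ((eR y : ↥(Ksub n lr)) : ℕ → V) = 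
          reIdx (F := F) (fun i => n + 1 - i) n (y : ℕ → V) from rfl,
        hQr x y, neg_neg]
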